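/- arXiv:2203.12028 — 2 statements merged into one kernel-verified Lean document; each statement's English description precedes it below -/
import Mathlib

section
/- Let H(q,p) = T(p) + U(q) on ℝ^n × ℝ^n and suppose the wave packet factorizes as R(t,q,p) = Q(t,q)·P(t,p) with ∫Q(t,q)dq = ∫P(t,p)dp = 1 and R satisfying the Liouville equation for the Hamiltonian vector field of H. Then the dispersions ∫|q−q̄(t)|²R dq dp and ∫|p−p̄(t)|²R dq dp are constant in time. -/
open MeasureTheory Set Function Pointwise

namespace DispersionsConst

variable {n : ℕ}

/-! ### Generic helpers -/

lemma fderiv_eq_zero_of_zero_on_open {X Y : Type*} [NormedAddCommGroup X] [NormedSpace ℝ X]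
    [NormedAddCommGroup Y] [NormedSpace ℝ Y]
    {f : X → Y} {O : Set X} (hO : IsOpen O) (hf : ∀ y ∈ O, f y = 0) {x : X} (hx : x ∈ O) :
    fderiv ℝ f x = 0 := by
  have hev : f =ᶠ[nhds x] (fun _ => (0 : Y)) :=
    Filter.eventually_of_mem (hO.mem_nhds hx) hf
  rw [hev.fderiv_eq]
  exact fderiv_const_apply 0

lemma hasDerivAt_curve {F : ℝ × (Fin n → ℝ) → ℝ} (hF : Differentiable ℝ F)
    (t t₀ : ℝ) (q γ : Fin n → ℝ) :
    HasDerivAt (fun τ => F (τ, q + (τ - t₀) • γ))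
      (fderiv ℝ F (t, q + (t - t₀) • γ) ((1 : ℝ), γ)) t := by
  have hcurve : HasDerivAt (fun τ : ℝ => (τ, q + (τ - t₀) • γ))
      ((1 : ℝ), γ) t := by
    have h2 : HasDerivAt (fun τ : ℝ => q + (τ - t₀) • γ) γ t := by
      have := (((hasDerivAt_id t).sub_const t₀).smul_const γ).const_add q
      simpa using this
    exact (hasDerivAt_id t).prodMk h2
  exact (hF.differentiableAt.hasFDerivAt).comp_hasDerivAt t hcurve

lemma hasDerivAt_slice_t {F : ℝ × (Fin n → ℝ) → ℝ} (hF : Differentiable ℝ F)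
    (t : ℝ) (x : Fin n → ℝ) :
    HasDerivAt (fun τ => F (τ, x)) (fderiv ℝ F (t, x) ((1 : ℝ), (0 : Fin n → ℝ))) t := by
  have h := hasDerivAt_curve hF t t x (0 : Fin n → ℝ)
  simpa using h

lemma fderiv_slice_x {F : ℝ × (Fin n → ℝ) → ℝ} (hF : Differentiable ℝ F)
    (t : ℝ) (x v : Fin n → ℝ) :
    fderiv ℝ (fun y => F (t, y)) x v = fderiv ℝ F (t, x) ((0 : ℝ), v) := by
  have hin : HasFDerivAt (fun y : Fin n → ℝ => (t, y))
      (ContinuousLinearMap.inr ℝ ℝ (Fin n → ℝ)) x :=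
    (hasFDerivAt_const t x).prodMk (hasFDerivAt_id x)
  have hcomp := (hF.differentiableAt.hasFDerivAt (x := (t, x))).comp x hin
  have : fderiv ℝ (fun y => F (t, y)) x
      = (fderiv ℝ F (t, x)).comp (ContinuousLinearMap.inr ℝ ℝ (Fin n → ℝ)) :=
    hcomp.fderiv
  rw [this]
  rfl

lemma vec_decomp (v : Fin n → ℝ) :
    (((0:ℝ), v) : ℝ × (Fin n → ℝ))
      = ∑ α : Fin n, (v α) • (((0:ℝ), Pi.single α (1:ℝ)) : ℝ × (Fin n → ℝ)) := by
  rw [Prod.ext_iff]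
  constructor
  · rw [Prod.fst_sum]
    simp
  · rw [Prod.snd_sum]
    simp only [Prod.smul_mk, smul_eq_mul]
    funext x
    rw [Finset.sum_apply]
    simp [Pi.single_apply, Finset.sum_ite_eq]

lemma clm_snd_decomp (L : (ℝ × (Fin n → ℝ)) →L[ℝ] ℝ) (v : Fin n → ℝ) :
    L ((0:ℝ), v) = ∑ α : Fin n, v α * L ((0:ℝ), Pi.single α 1) := by
  rw [vec_decomp v, map_sum]
  congr 1
  funext α
  rw [_root_.map_smul]
  rfl

lemma clm_fst_snd (L : (ℝ × (Fin n → ℝ)) →L[ℝ] ℝ) (v : Fin n → ℝ) :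
    L ((1:ℝ), v) = L ((1:ℝ), 0) + L ((0:ℝ), v) := by
  rw [← map_add]
  norm_num

/-- Integral of a directional derivative of a smooth compactly supported function vanishes. -/
lemma integral_fderiv_eq_zero {f : (Fin n → ℝ) → ℝ} (hf : ContDiff ℝ (⊤ : ℕ∞) f)
    (hsupp : HasCompactSupport f) (v : Fin n → ℝ) :
    ∫ x, fderiv ℝ f x v = 0 := by
  classical
  set K : Set (Fin n → ℝ) := tsupport f + Metric.closedBall (0 : Fin n → ℝ) ‖v‖ with hKdef
  have hKc : IsCompact K := IsCompact.add hsupp (isCompact_closedBall (0 : Fin n → ℝ) ‖v‖)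
  have hcont_fd : Continuous fun y => fderiv ℝ f y v :=
    (hf.continuous_fderiv (by simp)).clm_apply continuous_const
  obtain ⟨C, hC⟩ := hKc.exists_bound_of_continuousOn hcont_fd.continuousOn
  have hfd0 : ∀ y, y ∉ tsupport f → fderiv ℝ f y v = 0 := by
    intro y hy
    have : fderiv ℝ f y = 0 := by
      by_contra h
      exact hy (support_fderiv_subset ℝ (f := f) h)
    rw [this]; rfl
  have hsub : tsupport f ⊆ K := by
    intro y hy
    have : y = y + (0 : Fin n → ℝ) := (add_zero y).symm
    rw [this]
    exact Set.add_mem_add hy (by simp)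
  have hmeas : ∀ᶠ s : ℝ in nhds 0,
      AEStronglyMeasurable (fun x : Fin n → ℝ => f (x + s • v)) volume :=
    Filter.Eventually.of_forall fun s =>
      ((hf.continuous.comp (continuous_id.add continuous_const)).aestronglyMeasurable)
  have hint : Integrable (fun x : Fin n → ℝ => f (x + (0 : ℝ) • v)) volume := by
    simpa using hf.continuous.integrable_of_hasCompactSupport hsupp
  have hmeas' : AEStronglyMeasurable
      (fun x : Fin n → ℝ => fderiv ℝ f (x + (0 : ℝ) • v) v) volume :=
    ((hcont_fd.comp (continuous_id.add continuous_const))).aestronglyMeasurable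
  have hbound : ∀ᵐ x : Fin n → ℝ, ∀ s ∈ Metric.ball (0 : ℝ) 1,
      ‖fderiv ℝ f (x + s • v) v‖ ≤ K.indicator (fun _ => C) x := by
    refine Filter.Eventually.of_forall fun x => fun s hs => ?_
    by_cases hx : x ∈ K
    · rw [Set.indicator_of_mem hx]
      by_cases hy : x + s • v ∈ K
      · exact hC _ hy
      · have : x + s • v ∉ tsupport f := fun h => hy (hsub h)
        rw [hfd0 _ this]
        simp only [norm_zero]
        exact le_trans (norm_nonneg _) (hC x hx)
    · rw [Set.indicator_of_notMem hx]
      have hnot : x + s • v ∉ tsupport f := by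
        intro h
        apply hx
        have hball : -(s • v) ∈ Metric.closedBall (0 : Fin n → ℝ) ‖v‖ := by
          simp only [Metric.mem_closedBall, dist_zero_right, norm_neg, norm_smul,
            Real.norm_eq_abs]
          have : |s| ≤ 1 := le_of_lt (by simpa [Real.dist_eq] using hs)
          nlinarith [norm_nonneg v]
        have : x = (x + s • v) + -(s • v) := by abel
        rw [this]
        exact Set.add_mem_add h hball
      rw [hfd0 _ hnot]
      simp
  have hbd_int : Integrable (K.indicator fun _ => C) volume := by
    rw [integrable_indicator_iff hKc.measurableSet]
    exact integrableOn_const hKc.measure_lt_top.ne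
  have hdiff : ∀ᵐ x : Fin n → ℝ, ∀ s ∈ Metric.ball (0 : ℝ) 1,
      HasDerivAt (fun s : ℝ => f (x + s • v)) (fderiv ℝ f (x + s • v) v) s := by
    refine Filter.Eventually.of_forall fun x => fun s _ => ?_
    have hcurve : HasDerivAt (fun s : ℝ => x + s • v) v s := by
      simpa using ((hasDerivAt_id s).smul_const v).const_add x
    exact ((hf.differentiable (by simp)) (x + s • v)).hasFDerivAt.comp_hasDerivAt s hcurve
  have key := hasDerivAt_integral_of_dominated_loc_of_deriv_le (Metric.ball_mem_nhds 0 one_pos) hmeas hint hmeas'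
      hbound hbd_int hdiff
  have hconst : (fun s : ℝ => ∫ x, f (x + s • v)) = fun _ => ∫ x, f x := by
    funext s
    exact integral_add_right_eq_self f (s • v)
  have h0 : HasDerivAt (fun s : ℝ => ∫ x, f (x + s • v)) 0 0 := by
    rw [hconst]; exact hasDerivAt_const 0 _
  have := h0.unique key.2
  simpa using this.symm

/-- differentiation under the integral sign -/
lemma hasDerivAt_integral_weight
    {Q : ℝ → (Fin n → ℝ) → ℝ} (hQ : ContDiff ℝ (⊤ : ℕ∞) (uncurry Q))
    {t₀ ε : ℝ} (hε : 0 < ε) {K : Set (Fin n → ℝ)} (hKc : IsCompact K)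
    (hsupp : ∀ t ∈ Metric.ball t₀ ε, ∀ x, x ∉ K → Q t x = 0)
    (w : (Fin n → ℝ) → ℝ) (hw : Continuous w) :
    HasDerivAt (fun t => ∫ x, w x * Q t x)
      (∫ x, w x * fderiv ℝ (uncurry Q) (t₀, x) ((1 : ℝ), (0 : Fin n → ℝ))) t₀ := by
  classical
  set Qt : ℝ → (Fin n → ℝ) → ℝ :=
    fun s x => fderiv ℝ (uncurry Q) (s, x) ((1 : ℝ), (0 : Fin n → ℝ)) with hQtdef
  have hQcont : Continuous (uncurry Q) := hQ.continuous
  have hQtcont : Continuous (uncurry Qt) :=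
    ((hQ.continuous_fderiv (by simp)).clm_apply continuous_const)
  have hQt0 : ∀ s ∈ Metric.ball t₀ ε, ∀ x, x ∉ K → Qt s x = 0 := by
    intro s hs x hx
    have hO : IsOpen ((Metric.ball t₀ ε) ×ˢ Kᶜ : Set (ℝ × (Fin n → ℝ))) :=
      Metric.isOpen_ball.prod hKc.isClosed.isOpen_compl
    have h0 : fderiv ℝ (uncurry Q) (s, x) = 0 := by
      refine fderiv_eq_zero_of_zero_on_open hO ?_ (by exact ⟨hs, hx⟩)
      rintro ⟨s', x'⟩ ⟨hs', hx'⟩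
      exact hsupp s' hs' x' hx'
    simp only [Qt, h0]; rfl
  set L : Set (ℝ × (Fin n → ℝ)) := Metric.closedBall t₀ (ε/2) ×ˢ K with hLdef
  have hLc : IsCompact L := (isCompact_closedBall _ _).prod hKc
  have hwQtcont : Continuous fun z : ℝ × (Fin n → ℝ) => w z.2 * Qt z.1 z.2 :=
    (hw.comp continuous_snd).mul hQtcont
  obtain ⟨C, hC⟩ := hLc.exists_bound_of_continuousOn hwQtcont.continuousOn
  have hε2 : (0:ℝ) < min (ε/2) ε := lt_min (by linarith) hε
  have hmeas : ∀ᶠ s : ℝ in nhds t₀,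
      AEStronglyMeasurable (fun x : Fin n → ℝ => w x * Q s x) volume :=
    Filter.Eventually.of_forall fun s =>
      (hw.mul (hQcont.comp (continuous_const.prodMk continuous_id))).aestronglyMeasurable
  have hint : Integrable (fun x : Fin n → ℝ => w x * Q t₀ x) volume := by
    refine Continuous.integrable_of_hasCompactSupport
      (hw.mul (hQcont.comp (continuous_const.prodMk continuous_id))) ?_
    refine HasCompactSupport.intro hKc fun x hx => ?_
    rw [hsupp t₀ (Metric.mem_ball_self hε) x hx, mul_zero]
  have hmeas' : AEStronglyMeasurable (fun x : Fin n → ℝ => w x * Qt t₀ x) volume :=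
    (hw.mul (hQtcont.comp (continuous_const.prodMk continuous_id))).aestronglyMeasurable
  have hbound : ∀ᵐ x : Fin n → ℝ, ∀ s ∈ Metric.ball t₀ (min (ε/2) ε),
      ‖w x * Qt s x‖ ≤ K.indicator (fun _ => C) x := by
    refine Filter.Eventually.of_forall fun x s hs => ?_
    have hs1 : s ∈ Metric.ball t₀ ε :=
      Metric.ball_subset_ball (min_le_right _ _) hs
    by_cases hx : x ∈ K
    · rw [Set.indicator_of_mem hx]
      refine hC (s, x) ⟨?_, hx⟩
      have : dist s t₀ < min (ε/2) ε := hs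
      exact Metric.mem_closedBall.2 (le_of_lt (lt_of_lt_of_le this (min_le_left _ _)))
    · rw [Set.indicator_of_notMem hx, hQt0 s hs1 x hx, mul_zero]
      simp
  have hbd_int : Integrable (K.indicator fun _ => C) volume := by
    rw [integrable_indicator_iff hKc.measurableSet]
    exact integrableOn_const hKc.measure_lt_top.ne
  have hdiff : ∀ᵐ x : Fin n → ℝ, ∀ s ∈ Metric.ball t₀ (min (ε/2) ε),
      HasDerivAt (fun s => w x * Q s x) (w x * Qt s x) s := by
    refine Filter.Eventually.of_forall fun x s _ => ?_
    exact (hasDerivAt_slice_t (hQ.differentiable (by simp)) s x).const_mul (w x)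
  exact (hasDerivAt_integral_of_dominated_loc_of_deriv_le (Metric.ball_mem_nhds t₀ hε2) hmeas hint hmeas'
    hbound hbd_int hdiff).2

/-- the expanded Liouville equation -/
def EL (T U : (Fin n → ℝ) → ℝ) (Q P : ℝ → (Fin n → ℝ) → ℝ) : Prop :=
  ∀ t q p,
    fderiv ℝ (uncurry Q) (t, q) ((1:ℝ), (0 : Fin n → ℝ)) * P t p
      + Q t q * fderiv ℝ (uncurry P) (t, p) ((1:ℝ), (0 : Fin n → ℝ))
      + (∑ α : Fin n, fderiv ℝ T p (Pi.single α 1) *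
          (fderiv ℝ (uncurry Q) (t, q) ((0:ℝ), Pi.single α 1) * P t p))
      - (∑ α : Fin n, fderiv ℝ U q (Pi.single α 1) *
          (Q t q * fderiv ℝ (uncurry P) (t, p) ((0:ℝ), Pi.single α 1))) = 0

lemma EL.swap {T U : (Fin n → ℝ) → ℝ} {Q P : ℝ → (Fin n → ℝ) → ℝ}
    (h : EL T U Q P) : EL (fun x => -U x) (fun x => -T x) P Q := by
  intro t q p
  have h0 := h t p q
  have c1 : (∑ α : Fin n, fderiv ℝ (fun y => -U y) p (Pi.single α 1) *
      (fderiv ℝ (uncurry P) (t, q) ((0:ℝ), Pi.single α 1) * Q t p))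
      = -∑ α : Fin n, fderiv ℝ U p (Pi.single α 1) *
          (Q t p * fderiv ℝ (uncurry P) (t, q) ((0:ℝ), Pi.single α 1)) := by
    rw [← Finset.sum_neg_distrib]
    refine Finset.sum_congr rfl fun α _ => ?_
    rw [fderiv_fun_neg]
    simp only [ContinuousLinearMap.neg_apply]
    ring
  have c2 : (∑ α : Fin n, fderiv ℝ (fun y => -T y) q (Pi.single α 1) *
      (P t q * fderiv ℝ (uncurry Q) (t, p) ((0:ℝ), Pi.single α 1)))
      = -∑ α : Fin n, fderiv ℝ T q (Pi.single α 1) *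
          (fderiv ℝ (uncurry Q) (t, p) ((0:ℝ), Pi.single α 1) * P t q) := by
    rw [← Finset.sum_neg_distrib]
    refine Finset.sum_congr rfl fun α _ => ?_
    rw [fderiv_fun_neg]
    simp only [ContinuousLinearMap.neg_apply]
    ring
  rw [c1, c2]
  linarith [h0]

/-- locally-in-time uniform compact support control -/
lemma locsupp (T U : (Fin n → ℝ) → ℝ) (Q P : ℝ → (Fin n → ℝ) → ℝ)
    (hU : ContDiff ℝ (⊤ : ℕ∞) U)
    (hQ : ContDiff ℝ (⊤ : ℕ∞) (uncurry Q)) (hP : ContDiff ℝ (⊤ : ℕ∞) (uncurry P))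
    (hQsupp : ∀ t, HasCompactSupport (Q t))
    (hPnorm : ∀ t, ∫ p, P t p = 1)
    (hEL : EL T U Q P) (t₀ : ℝ) :
    ∃ ε > 0, ∃ K : Set (Fin n → ℝ), IsCompact K ∧
      ∀ t ∈ Metric.ball t₀ ε, ∀ x, x ∉ K → Q t x = 0 := by
  classical
  obtain ⟨p₀, hp₀⟩ : ∃ p₀, P t₀ p₀ ≠ 0 := by
    by_contra hc; push_neg at hc
    have h1 := hPnorm t₀
    rw [show (fun p => P t₀ p) = fun _ => (0:ℝ) from funext hc] at h1
    simp at h1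
  have hPcont : Continuous fun s => P s p₀ :=
    hP.continuous.comp (continuous_id.prodMk continuous_const)
  have hopen : IsOpen {s : ℝ | P s p₀ ≠ 0} := isOpen_ne.preimage hPcont
  obtain ⟨ε, hε, hball⟩ := Metric.isOpen_iff.1 hopen t₀ hp₀
  set γ : Fin n → ℝ := fun α => fderiv ℝ T p₀ (Pi.single α 1) with hγ
  set K : Set (Fin n → ℝ) :=
    (fun z : (Fin n → ℝ) × ℝ => z.1 + z.2 • γ) '' (tsupport (Q t₀) ×ˢ Icc (-ε) ε) with hK
  have hKc : IsCompact K :=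
    (((hQsupp t₀).prod isCompact_Icc).image (by fun_prop))
  refine ⟨ε, hε, K, hKc, ?_⟩
  intro t ht y hy
  by_contra hQty
  apply hy
  set q : Fin n → ℝ := y - (t - t₀) • γ with hqdef
  have hyq : q + (t - t₀) • γ = y := by rw [hqdef]; abel
  set h : ℝ → ℝ := fun s => Q s (q + (s - t₀) • γ) with hh
  set g : ℝ → ℝ := fun s =>
    (-(fderiv ℝ (uncurry P) (s, p₀) ((1:ℝ), (0 : Fin n → ℝ)))
      + ∑ α : Fin n, fderiv ℝ U (q + (s - t₀) • γ) (Pi.single α 1)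
          * fderiv ℝ (uncurry P) (s, p₀) ((0:ℝ), Pi.single α 1)) / P s p₀ with hg
  have hderiv : ∀ s ∈ Metric.ball t₀ ε, HasDerivAt h (g s * h s) s := by
    intro s hs
    have hPb : P s p₀ ≠ 0 := hball hs
    have h1 := hasDerivAt_curve (hQ.differentiable (by simp)) s t₀ q γ
    have heq := hEL s (q + (s - t₀) • γ) p₀
    set L := fderiv ℝ (uncurry Q) (s, q + (s - t₀) • γ) with hL
    have hgoal : L ((1:ℝ), γ) = g s * h s := by
      rw [clm_fst_snd, clm_snd_decomp]
      have hs1 : ∑ α : Fin n, fderiv ℝ T p₀ (Pi.single α 1) *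
          (L ((0:ℝ), Pi.single α 1) * P s p₀)
          = (∑ α : Fin n, γ α * L ((0:ℝ), Pi.single α 1)) * P s p₀ := by
        rw [Finset.sum_mul]
        congr 1; funext α; ring
      have hs2 : ∑ α : Fin n, fderiv ℝ U (q + (s - t₀) • γ) (Pi.single α 1) *
          (Q s (q + (s - t₀) • γ) * fderiv ℝ (uncurry P) (s, p₀) ((0:ℝ), Pi.single α 1))
          = Q s (q + (s - t₀) • γ) *
            ∑ α : Fin n, fderiv ℝ U (q + (s - t₀) • γ) (Pi.single α 1) *
              fderiv ℝ (uncurry P) (s, p₀) ((0:ℝ), Pi.single α 1) := by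
        rw [Finset.mul_sum]
        congr 1; funext α; ring
      rw [hs1, hs2] at heq
      rw [hg, hh]
      field_simp
      linarith [heq]
    rw [← hgoal]
    exact h1
  have hgcont : ContinuousOn g (Metric.ball t₀ ε) := by
    have hnum : Continuous fun s =>
        -(fderiv ℝ (uncurry P) (s, p₀) ((1:ℝ), (0 : Fin n → ℝ)))
          + ∑ α : Fin n, fderiv ℝ U (q + (s - t₀) • γ) (Pi.single α 1)
              * fderiv ℝ (uncurry P) (s, p₀) ((0:ℝ), Pi.single α 1) := by
      have hfP : Continuous fun s : ℝ => fderiv ℝ (uncurry P) (s, p₀) :=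
        (hP.continuous_fderiv (by simp)).comp (continuous_id.prodMk continuous_const)
      refine ((hfP.clm_apply continuous_const).neg).add ?_
      refine continuous_finset_sum _ fun α _ => ?_
      refine Continuous.mul ?_ (hfP.clm_apply continuous_const)
      have hfU : Continuous fun x : Fin n → ℝ => fderiv ℝ U x :=
        hU.continuous_fderiv (by simp)
      have hcurve : Continuous fun s : ℝ => q + (s - t₀) • γ := by fun_prop
      exact ((hfU.comp hcurve).clm_apply continuous_const)
    exact hnum.continuousOn.div hPcont.continuousOn fun s hs => hball hs
  set a := min t₀ t with ha
  set b := max t₀ t with hb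
  have hIcc : Icc a b ⊆ Metric.ball t₀ ε := by
    intro s hs
    rw [Real.ball_eq_Ioo] at ht ⊢
    have h1 : t₀ - ε < a := lt_min (by linarith) ht.1
    have h2 : b < t₀ + ε := max_lt (by linarith) ht.2
    exact ⟨lt_of_lt_of_le h1 hs.1, lt_of_le_of_lt hs.2 h2⟩
  set G : ℝ → ℝ := fun u => ∫ x in a..u, g x with hG
  have hGd : ∀ s ∈ Icc a b, HasDerivAt G (g s) s := by
    intro s hs
    refine intervalIntegral.integral_hasDerivAt_right ?_ ?_ ?_
    · refine ContinuousOn.intervalIntegrable (hgcont.mono ?_)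
      intro u hu
      refine hIcc ?_
      rcases hs with ⟨hsa, hsb⟩
      rw [Set.uIcc_of_le hsa] at hu
      exact ⟨hu.1, le_trans hu.2 hsb⟩
    · exact ContinuousOn.stronglyMeasurableAtFilter Metric.isOpen_ball hgcont s (hIcc hs)
    · exact hgcont.continuousAt (Metric.isOpen_ball.mem_nhds (hIcc hs))
  set w : ℝ → ℝ := fun s => h s * Real.exp (-G s) with hw
  have hwd : ∀ s ∈ Icc a b, HasDerivAt w 0 s := by
    intro s hs
    have h1 := hderiv s (hIcc hs)
    have h2 : HasDerivAt (fun u => Real.exp (-G u)) (Real.exp (-G s) * -g s) s :=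
      ((hGd s hs).neg).exp
    have h3 : HasDerivAt (fun u => h u * Real.exp (-G u))
        (g s * h s * Real.exp (-G s) + h s * (Real.exp (-G s) * -g s)) s := h1.mul h2
    convert h3 using 1
    ring
  have hwcont : ContinuousOn w (Icc a b) := by
    refine ContinuousOn.mul ?_ ?_
    · have : Continuous h :=
        hQ.continuous.comp (continuous_id.prodMk (by fun_prop))
      exact this.continuousOn
    · refine Real.continuous_exp.comp_continuousOn ?_
      exact (ContinuousOn.neg fun s hs => (hGd s hs).continuousAt.continuousWithinAt)
  have hconst := constant_of_has_deriv_right_zero hwcont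
    (fun s hs => (hwd s (Ico_subset_Icc_self hs)).hasDerivWithinAt)
  have hta : t ∈ Icc a b := ⟨min_le_right _ _, le_max_right _ _⟩
  have ht₀a : t₀ ∈ Icc a b := ⟨min_le_left _ _, le_max_left _ _⟩
  have hwe : h t * Real.exp (-G t) = h t₀ * Real.exp (-G t₀) := by
    rw [show h t * Real.exp (-G t) = w t from rfl, show h t₀ * Real.exp (-G t₀) = w t₀ from rfl,
      hconst t hta, hconst t₀ ht₀a]
  have hht : h t ≠ 0 := by
    rw [hh]
    simpa [hyq] using hQty
  have hht₀ : h t₀ ≠ 0 := by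
    intro hzero
    apply hht
    rw [hzero, zero_mul] at hwe
    exact (mul_eq_zero.1 hwe).resolve_right (Real.exp_ne_zero (-G t))
  have hqsupp : q ∈ tsupport (Q t₀) := by
    apply subset_closure
    simp only [Function.mem_support]
    simpa [hh] using hht₀
  have hIccmem : t - t₀ ∈ Icc (-ε) ε := by
    rw [Real.ball_eq_Ioo] at ht
    constructor
    · linarith [ht.1]
    · linarith [ht.2]
  exact ⟨(q, t - t₀), ⟨⟨hqsupp, hIccmem⟩, hyq⟩⟩

lemma key (T U : (Fin n → ℝ) → ℝ) (Q P : ℝ → (Fin n → ℝ) → ℝ)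
    (hT : ContDiff ℝ (⊤ : ℕ∞) T) (hU : ContDiff ℝ (⊤ : ℕ∞) U)
    (hQ : ContDiff ℝ (⊤ : ℕ∞) (uncurry Q)) (hP : ContDiff ℝ (⊤ : ℕ∞) (uncurry P))
    (hQsupp : ∀ t, HasCompactSupport (Q t)) (hPsupp : ∀ t, HasCompactSupport (P t))
    (hQnorm : ∀ t, ∫ q, Q t q = 1) (hPnorm : ∀ t, ∫ p, P t p = 1)
    (hEL : EL T U Q P) (t₁ t₂ : ℝ) :
    (∫ q, (∑ α : Fin n, (q α - ∫ y, y α * Q t₁ y) ^ 2) * Q t₁ q)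
      = ∫ q, (∑ α : Fin n, (q α - ∫ y, y α * Q t₂ y) ^ 2) * Q t₂ q := by
  classical
  have hQslcd : ∀ t, ContDiff ℝ (⊤ : ℕ∞) (Q t) := fun t =>
    hQ.comp ((contDiff_const (c := t)).prodMk contDiff_id)
  have hPslcd : ∀ t, ContDiff ℝ (⊤ : ℕ∞) (P t) := fun t =>
    hP.comp ((contDiff_const (c := t)).prodMk contDiff_id)
  have hQslc : ∀ t, Continuous (Q t) := fun t => (hQslcd t).continuous
  have hPslc : ∀ t, Continuous (P t) := fun t => (hPslcd t).continuous
  have hwcont_proj : ∀ α : Fin n, Continuous fun y : Fin n → ℝ => y α :=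
    fun α => continuous_apply α
  have hwcont_sq : Continuous fun y : Fin n → ℝ => ∑ α : Fin n, (y α)^2 :=
    continuous_finset_sum _ fun α _ => (continuous_apply α).pow 2
  have intQw : ∀ (t : ℝ) (w : (Fin n → ℝ) → ℝ), Continuous w →
      Integrable (fun y => w y * Q t y) volume := fun t w hw =>
    (hw.mul (hQslc t)).integrable_of_hasCompactSupport ((hQsupp t).mul_left)
  have intQxw : ∀ (t : ℝ) (w : (Fin n → ℝ) → ℝ), Continuous w → ∀ v : Fin n → ℝ,
      Integrable (fun y => w y * fderiv ℝ (Q t) y v) volume := by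
    intro t w hw v
    refine Continuous.integrable_of_hasCompactSupport
      (hw.mul ((((hQslcd t).continuous_fderiv (by simp)).clm_apply continuous_const))) ?_
    refine HasCompactSupport.intro (hQsupp t) fun y hy => ?_
    have h0 : fderiv ℝ (Q t) y = 0 := by
      by_contra hcon
      exact hy (support_fderiv_subset ℝ (f := Q t) hcon)
    rw [h0]
    simp
  set m : ℝ → Fin n → ℝ := fun t α => ∫ y, y α * Q t y with hm
  set E2 : ℝ → ℝ := fun t => ∫ y, (∑ α : Fin n, (y α)^2) * Q t y with hE2def
  set D : ℝ → ℝ := fun t => E2 t - ∑ α : Fin n, (m t α)^2 with hDdef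
  -- Step A : the dispersion equals E2 - ∑ m²
  have stepA : ∀ t, (∫ q, (∑ α : Fin n, (q α - m t α) ^ 2) * Q t q) = D t := by
    intro t
    have h2 : ∀ y : Fin n → ℝ, (∑ α : Fin n, 2 * m t α * y α) * Q t y
        = ∑ α : Fin n, (2 * m t α) * (y α * Q t y) := by
      intro y
      rw [Finset.sum_mul]
      exact Finset.sum_congr rfl fun α _ => by ring
    have hfun : ∀ y : Fin n → ℝ, (∑ α : Fin n, (y α - m t α) ^ 2) * Q t y
        = (∑ α : Fin n, (y α)^2) * Q t y
          - (∑ α : Fin n, (2 * m t α) * (y α * Q t y))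
          + (∑ α : Fin n, (m t α)^2) * Q t y := by
      intro y
      have h1 : (∑ α : Fin n, (y α - m t α) ^ 2)
          = ((∑ α : Fin n, (y α)^2) - (∑ α : Fin n, 2 * m t α * y α))
            + ∑ α : Fin n, (m t α)^2 := by
        rw [← Finset.sum_sub_distrib, ← Finset.sum_add_distrib]
        exact Finset.sum_congr rfl fun α _ => by ring
      rw [h1, add_mul, sub_mul, h2]
    have hi1 := intQw t _ hwcont_sq
    have hi2 : Integrable (fun y => ∑ α : Fin n, (2 * m t α) * (y α * Q t y)) volume :=
      integrable_finset_sum _ fun α _ => ((intQw t _ (hwcont_proj α)).const_mul _)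
    have hi3 : Integrable (fun y => (∑ α : Fin n, (m t α)^2) * Q t y) volume :=
      intQw t (fun _ => ∑ α : Fin n, (m t α)^2) continuous_const
    have hi12 : Integrable (fun y => (∑ α : Fin n, (y α)^2) * Q t y
        - ∑ α : Fin n, (2 * m t α) * (y α * Q t y)) volume := hi1.sub hi2
    rw [show (fun q => (∑ α : Fin n, (q α - m t α) ^ 2) * Q t q)
        = fun q => (∑ α : Fin n, (q α)^2) * Q t q
          - (∑ α : Fin n, (2 * m t α) * (q α * Q t q))
          + (∑ α : Fin n, (m t α)^2) * Q t q from funext hfun]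
    rw [integral_add hi12 hi3, integral_sub hi1 hi2,
      integral_finset_sum _ fun α _ => ((intQw t _ (hwcont_proj α)).const_mul _)]
    simp only [integral_const_mul]
    rw [hQnorm t]
    have hfin : ∑ α : Fin n, (2 * m t α) * ∫ y, y α * Q t y
        = (∑ α : Fin n, (m t α)^2) + ∑ α : Fin n, (m t α)^2 := by
      rw [← Finset.sum_add_distrib]
      refine Finset.sum_congr rfl fun α _ => ?_
      have : (∫ y, y α * Q t y) = m t α := rfl
      rw [this]
      ring
    rw [hDdef]
    simp only
    rw [hfin]
    ring
  -- Step B : D has zero derivative everywhere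
  have stepB : ∀ t₀ : ℝ, HasDerivAt D 0 t₀ := by
    intro t₀
    obtain ⟨ε₁, hε₁, K₁, hK₁c, hs₁⟩ := locsupp T U Q P hU hQ hP hQsupp hPnorm hEL t₀
    obtain ⟨ε₂, hε₂, K₂, hK₂c, hs₂⟩ := locsupp (fun x => -U x) (fun x => -T x) P Q
      hT.neg hP hQ hPsupp hQnorm hEL.swap t₀
    set ε := min ε₁ ε₂ with hεdef
    have hεpos : 0 < ε := lt_min hε₁ hε₂
    have hs₁' : ∀ t ∈ Metric.ball t₀ ε, ∀ x, x ∉ K₁ → Q t x = 0 := fun t ht =>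
      hs₁ t (Metric.ball_subset_ball (min_le_left _ _) ht)
    have hs₂' : ∀ t ∈ Metric.ball t₀ ε, ∀ x, x ∉ K₂ → P t x = 0 := fun t ht =>
      hs₂ t (Metric.ball_subset_ball (min_le_right _ _) ht)
    -- ∫ ∂ₜ P = 0
    have hPt0 : (∫ p, fderiv ℝ (uncurry P) (t₀, p) ((1:ℝ), (0 : Fin n → ℝ))) = 0 := by
      have hd := hasDerivAt_integral_weight hP hεpos hK₂c hs₂' (fun _ => (1:ℝ)) continuous_const
      have hconst : (fun t => ∫ p, (1:ℝ) * P t p) = fun _ : ℝ => (1:ℝ) := by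
        funext t
        simp only [one_mul]
        exact hPnorm t
      rw [hconst] at hd
      have h0 := (hasDerivAt_const t₀ (1:ℝ)).unique hd
      simp only [one_mul] at h0
      exact h0.symm
    -- ∫ ∂ₚ P = 0
    have hPx0 : ∀ α : Fin n, (∫ p, fderiv ℝ (uncurry P) (t₀, p) ((0:ℝ), Pi.single α 1)) = 0 := by
      intro α
      have h1 := integral_fderiv_eq_zero (hPslcd t₀) (hPsupp t₀) (Pi.single α 1)
      rw [show (fun p => fderiv ℝ (uncurry P) (t₀, p) ((0:ℝ), Pi.single α 1))
          = fun p => fderiv ℝ (P t₀) p (Pi.single α 1) from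
        funext fun p => (fderiv_slice_x (hP.differentiable (by simp)) t₀ p (Pi.single α 1)).symm]
      exact h1
    -- some integrable families in p
    have hPF0 : ∀ p, p ∉ K₂ → fderiv ℝ (uncurry P) (t₀, p) = 0 := by
      intro p hp
      refine fderiv_eq_zero_of_zero_on_open
        (Metric.isOpen_ball.prod hK₂c.isClosed.isOpen_compl) ?_
        (⟨Metric.mem_ball_self hεpos, hp⟩ :
          (t₀, p) ∈ (Metric.ball t₀ ε) ×ˢ (K₂ᶜ : Set (Fin n → ℝ)))
      rintro ⟨s', x'⟩ ⟨hs', hx'⟩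
      exact hs₂' s' hs' x' hx'
    have hPdercont : Continuous fun p : Fin n → ℝ => fderiv ℝ (uncurry P) (t₀, p) :=
      (hP.continuous_fderiv (by simp)).comp (continuous_const.prodMk continuous_id)
    have hPtFint : Integrable
        (fun p => fderiv ℝ (uncurry P) (t₀, p) ((1:ℝ), (0 : Fin n → ℝ))) volume := by
      refine Continuous.integrable_of_hasCompactSupport
        (hPdercont.clm_apply continuous_const) ?_
      refine HasCompactSupport.intro hK₂c fun p hp => ?_
      rw [hPF0 p hp]
      rfl
    have hPxFint : ∀ α : Fin n, Integrable
        (fun p => fderiv ℝ (uncurry P) (t₀, p) ((0:ℝ), Pi.single α 1)) volume := by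
      intro α
      refine Continuous.integrable_of_hasCompactSupport
        (hPdercont.clm_apply continuous_const) ?_
      refine HasCompactSupport.intro hK₂c fun p hp => ?_
      rw [hPF0 p hp]
      rfl
    have hPint : Integrable (P t₀) volume :=
      (hPslc t₀).integrable_of_hasCompactSupport (hPsupp t₀)
    set c : Fin n → ℝ := fun α => ∫ p, fderiv ℝ T p (Pi.single α 1) * P t₀ p with hcdef
    have hcint : ∀ α : Fin n,
        Integrable (fun p => fderiv ℝ T p (Pi.single α 1) * P t₀ p) volume := fun α =>
      ((((hT.continuous_fderiv (by simp)).clm_apply continuous_const)).mul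
        (hPslc t₀)).integrable_of_hasCompactSupport ((hPsupp t₀).mul_left)
    -- reduced transport equation at t₀
    have RQ : ∀ q', fderiv ℝ (uncurry Q) (t₀, q') ((1:ℝ), (0 : Fin n → ℝ))
        = -∑ α : Fin n, c α * fderiv ℝ (Q t₀) q' (Pi.single α 1) := by
      intro q'
      set Aq := fderiv ℝ (uncurry Q) (t₀, q') ((1:ℝ), (0 : Fin n → ℝ)) with hAqdef
      set Bq : Fin n → ℝ := fun α => fderiv ℝ (uncurry Q) (t₀, q') ((0:ℝ), Pi.single α 1)
        with hBqdef
      have hiA : Integrable (fun p => Aq * P t₀ p) volume := hPint.const_mul _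
      have hiB : Integrable (fun p => Q t₀ q' *
          fderiv ℝ (uncurry P) (t₀, p) ((1:ℝ), (0 : Fin n → ℝ))) volume :=
        hPtFint.const_mul _
      have hiCα : ∀ α : Fin n, Integrable
          (fun p => fderiv ℝ T p (Pi.single α 1) * (Bq α * P t₀ p)) volume := by
        intro α
        rw [show (fun p => fderiv ℝ T p (Pi.single α 1) * (Bq α * P t₀ p))
            = fun p => Bq α * (fderiv ℝ T p (Pi.single α 1) * P t₀ p) from
          funext fun p => by ring]
        exact (hcint α).const_mul _
      have hiDα : ∀ α : Fin n, Integrable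
          (fun p => fderiv ℝ U q' (Pi.single α 1) *
            (Q t₀ q' * fderiv ℝ (uncurry P) (t₀, p) ((0:ℝ), Pi.single α 1))) volume := by
        intro α
        rw [show (fun p => fderiv ℝ U q' (Pi.single α 1) *
            (Q t₀ q' * fderiv ℝ (uncurry P) (t₀, p) ((0:ℝ), Pi.single α 1)))
            = fun p => (fderiv ℝ U q' (Pi.single α 1) * Q t₀ q') *
              fderiv ℝ (uncurry P) (t₀, p) ((0:ℝ), Pi.single α 1) from
          funext fun p => by ring]
        exact (hPxFint α).const_mul _
      have hiC : Integrable (fun p => ∑ α : Fin n,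
          fderiv ℝ T p (Pi.single α 1) * (Bq α * P t₀ p)) volume :=
        integrable_finset_sum _ fun α _ => hiCα α
      have hiD : Integrable (fun p => ∑ α : Fin n,
          fderiv ℝ U q' (Pi.single α 1) *
            (Q t₀ q' * fderiv ℝ (uncurry P) (t₀, p) ((0:ℝ), Pi.single α 1))) volume :=
        integrable_finset_sum _ fun α _ => hiDα α
      have hzero : (∫ p, (Aq * P t₀ p
          + Q t₀ q' * fderiv ℝ (uncurry P) (t₀, p) ((1:ℝ), (0 : Fin n → ℝ))
          + (∑ α : Fin n, fderiv ℝ T p (Pi.single α 1) * (Bq α * P t₀ p))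
          - (∑ α : Fin n, fderiv ℝ U q' (Pi.single α 1) *
              (Q t₀ q' * fderiv ℝ (uncurry P) (t₀, p) ((0:ℝ), Pi.single α 1))))) = 0 := by
        rw [show (fun p => (Aq * P t₀ p
          + Q t₀ q' * fderiv ℝ (uncurry P) (t₀, p) ((1:ℝ), (0 : Fin n → ℝ))
          + (∑ α : Fin n, fderiv ℝ T p (Pi.single α 1) * (Bq α * P t₀ p))
          - (∑ α : Fin n, fderiv ℝ U q' (Pi.single α 1) *
              (Q t₀ q' * fderiv ℝ (uncurry P) (t₀, p) ((0:ℝ), Pi.single α 1)))))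
            = fun _ => (0:ℝ) from funext fun p => hEL t₀ q' p]
        simp
      have hiAB : Integrable (fun p => Aq * P t₀ p
          + Q t₀ q' * fderiv ℝ (uncurry P) (t₀, p) ((1:ℝ), (0 : Fin n → ℝ))) volume :=
        hiA.add hiB
      have hiABC : Integrable (fun p => Aq * P t₀ p
          + Q t₀ q' * fderiv ℝ (uncurry P) (t₀, p) ((1:ℝ), (0 : Fin n → ℝ))
          + ∑ α : Fin n, fderiv ℝ T p (Pi.single α 1) * (Bq α * P t₀ p)) volume :=
        hiAB.add hiC
      rw [integral_sub hiABC hiD, integral_add hiAB hiC, integral_add hiA hiB] at hzero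
      have e1 : (∫ p, Aq * P t₀ p) = Aq := by
        rw [integral_const_mul, hPnorm t₀, mul_one]
      have e2 : (∫ p, Q t₀ q' *
          fderiv ℝ (uncurry P) (t₀, p) ((1:ℝ), (0 : Fin n → ℝ))) = 0 := by
        rw [integral_const_mul, hPt0, mul_zero]
      have e3 : (∫ p, ∑ α : Fin n, fderiv ℝ T p (Pi.single α 1) * (Bq α * P t₀ p))
          = ∑ α : Fin n, Bq α * c α := by
        rw [integral_finset_sum _ fun α _ => hiCα α]
        refine Finset.sum_congr rfl fun α _ => ?_
        rw [show (fun p => fderiv ℝ T p (Pi.single α 1) * (Bq α * P t₀ p))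
            = fun p => Bq α * (fderiv ℝ T p (Pi.single α 1) * P t₀ p) from
          funext fun p => by ring]
        rw [integral_const_mul]
      have e4 : (∫ p, ∑ α : Fin n, fderiv ℝ U q' (Pi.single α 1) *
          (Q t₀ q' * fderiv ℝ (uncurry P) (t₀, p) ((0:ℝ), Pi.single α 1))) = 0 := by
        rw [integral_finset_sum _ fun α _ => hiDα α]
        refine Finset.sum_eq_zero fun α _ => ?_
        rw [show (fun p => fderiv ℝ U q' (Pi.single α 1) *
            (Q t₀ q' * fderiv ℝ (uncurry P) (t₀, p) ((0:ℝ), Pi.single α 1)))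
            = fun p => (fderiv ℝ U q' (Pi.single α 1) * Q t₀ q') *
              fderiv ℝ (uncurry P) (t₀, p) ((0:ℝ), Pi.single α 1) from
          funext fun p => by ring]
        rw [integral_const_mul, hPx0 α, mul_zero]
      rw [e1, e2, e3, e4] at hzero
      have hsw : ∀ α : Fin n, fderiv ℝ (Q t₀) q' (Pi.single α 1) = Bq α := fun α =>
        fderiv_slice_x (hQ.differentiable (by simp)) t₀ q' (Pi.single α 1)
      have hgoal : Aq = -∑ α : Fin n, c α * Bq α := by
        have hswap : (∑ α : Fin n, Bq α * c α) = ∑ α : Fin n, c α * Bq α :=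
          Finset.sum_congr rfl fun α _ => mul_comm _ _
        rw [hswap] at hzero
        linarith
      rw [hgoal]
      congr 1
      exact Finset.sum_congr rfl fun α _ => by rw [hsw α]
    -- integration by parts identities
    have IBP1 : ∀ α β : Fin n,
        (∫ y, y α * fderiv ℝ (Q t₀) y (Pi.single β 1)) = -((Pi.single β 1 : Fin n → ℝ) α) := by
      intro α β
      have hsmooth : ContDiff ℝ (⊤ : ℕ∞) (fun y : Fin n → ℝ => y α * Q t₀ y) :=
        ((ContinuousLinearMap.proj (R := ℝ) (φ := fun _ : Fin n => ℝ) α).contDiff).mul (hQslcd t₀)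
      have hsupp2 : HasCompactSupport (fun y : Fin n → ℝ => y α * Q t₀ y) :=
        (hQsupp t₀).mul_left
      have h0 := integral_fderiv_eq_zero hsmooth hsupp2 (Pi.single β 1)
      have hfd : ∀ y : Fin n → ℝ,
          fderiv ℝ (fun y : Fin n → ℝ => y α * Q t₀ y) y (Pi.single β 1)
          = y α * fderiv ℝ (Q t₀) y (Pi.single β 1) + ((Pi.single β 1 : Fin n → ℝ) α) * Q t₀ y := by
        intro y
        have hproj : HasFDerivAt (fun y : Fin n → ℝ => y α)
            (ContinuousLinearMap.proj (R := ℝ) (φ := fun _ : Fin n => ℝ) α) y :=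
          (ContinuousLinearMap.proj (R := ℝ) (φ := fun _ : Fin n => ℝ) α).hasFDerivAt
        have hQd : HasFDerivAt (Q t₀) (fderiv ℝ (Q t₀) y) y :=
          (((hQslcd t₀).differentiable (by simp)) y).hasFDerivAt
        have hmul : HasFDerivAt (fun y : Fin n → ℝ => y α * Q t₀ y) _ y := hproj.mul hQd
        rw [hmul.fderiv]
        simp only [ContinuousLinearMap.add_apply, ContinuousLinearMap.smul_apply,
          smul_eq_mul, ContinuousLinearMap.proj_apply]
        ring
      rw [show (fun y : Fin n → ℝ =>
          fderiv ℝ (fun y : Fin n → ℝ => y α * Q t₀ y) y (Pi.single β 1))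
          = fun y => y α * fderiv ℝ (Q t₀) y (Pi.single β 1)
            + ((Pi.single β 1 : Fin n → ℝ) α) * Q t₀ y from funext hfd] at h0
      rw [integral_add (intQxw t₀ _ (hwcont_proj α) _)
        ((intQw t₀ (fun _ => (Pi.single β 1 : Fin n → ℝ) α) continuous_const))] at h0
      rw [integral_const_mul, hQnorm t₀, mul_one] at h0
      linarith
    have IBP2 : ∀ β : Fin n,
        (∫ y, (∑ α : Fin n, (y α)^2) * fderiv ℝ (Q t₀) y (Pi.single β 1))
          = -(2 * m t₀ β) := by
      intro β
      have hsq : ∀ α : Fin n, (∫ y, (y α)^2 * fderiv ℝ (Q t₀) y (Pi.single β 1))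
          = -((2 * (Pi.single β 1 : Fin n → ℝ) α) * m t₀ α) := by
        intro α
        have hsmooth : ContDiff ℝ (⊤ : ℕ∞) (fun y : Fin n → ℝ => (y α * y α) * Q t₀ y) :=
          (((ContinuousLinearMap.proj (R := ℝ) (φ := fun _ : Fin n => ℝ) α).contDiff).mul
            ((ContinuousLinearMap.proj (R := ℝ) (φ := fun _ : Fin n => ℝ) α).contDiff)).mul (hQslcd t₀)
        have hsupp2 : HasCompactSupport (fun y : Fin n → ℝ => (y α * y α) * Q t₀ y) :=
          (hQsupp t₀).mul_left
        have h0 := integral_fderiv_eq_zero hsmooth hsupp2 (Pi.single β 1)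
        have hfd : ∀ y : Fin n → ℝ,
            fderiv ℝ (fun y : Fin n → ℝ => (y α * y α) * Q t₀ y) y (Pi.single β 1)
            = (y α)^2 * fderiv ℝ (Q t₀) y (Pi.single β 1)
              + (2 * (Pi.single β 1 : Fin n → ℝ) α) * (y α * Q t₀ y) := by
          intro y
          have hproj : HasFDerivAt (fun y : Fin n → ℝ => y α)
              (ContinuousLinearMap.proj (R := ℝ) (φ := fun _ : Fin n => ℝ) α) y :=
            (ContinuousLinearMap.proj (R := ℝ) (φ := fun _ : Fin n => ℝ) α).hasFDerivAt
          have hQd : HasFDerivAt (Q t₀) (fderiv ℝ (Q t₀) y) y :=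
            (((hQslcd t₀).differentiable (by simp)) y).hasFDerivAt
          have hmul : HasFDerivAt (fun y : Fin n → ℝ => (y α * y α) * Q t₀ y) _ y :=
            (hproj.mul hproj).mul hQd
          rw [hmul.fderiv]
          simp only [ContinuousLinearMap.add_apply, ContinuousLinearMap.smul_apply,
            smul_eq_mul, ContinuousLinearMap.proj_apply, Pi.mul_apply]
          ring
        rw [show (fun y : Fin n → ℝ =>
            fderiv ℝ (fun y : Fin n → ℝ => (y α * y α) * Q t₀ y) y (Pi.single β 1))
            = fun y => (y α)^2 * fderiv ℝ (Q t₀) y (Pi.single β 1)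
              + (2 * (Pi.single β 1 : Fin n → ℝ) α) * (y α * Q t₀ y) from funext hfd] at h0
        rw [integral_add (intQxw t₀ (fun y => (y α)^2) ((hwcont_proj α).pow 2) _)
          ((intQw t₀ _ (hwcont_proj α)).const_mul _)] at h0
        rw [integral_const_mul] at h0
        have : (∫ y, y α * Q t₀ y) = m t₀ α := rfl
        rw [this] at h0
        linarith
      rw [show (fun y : Fin n → ℝ =>
          (∑ α : Fin n, (y α)^2) * fderiv ℝ (Q t₀) y (Pi.single β 1))
          = fun y => ∑ α : Fin n, (y α)^2 * fderiv ℝ (Q t₀) y (Pi.single β 1) from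
        funext fun y => by rw [Finset.sum_mul]]
      rw [integral_finset_sum _ fun α _ => intQxw t₀ (fun y => (y α)^2) ((hwcont_proj α).pow 2) _]
      rw [show (∑ α : Fin n, ∫ y, (y α)^2 * fderiv ℝ (Q t₀) y (Pi.single β 1))
          = ∑ α : Fin n, -((2 * (Pi.single β 1 : Fin n → ℝ) α) * m t₀ α) from
        Finset.sum_congr rfl fun α _ => hsq α]
      simp [Pi.single_apply]
    -- derivative of the moments
    have hmder : ∀ α : Fin n, HasDerivAt (fun t => m t α) (c α) t₀ := by
      intro α
      have hd := hasDerivAt_integral_weight hQ hεpos hK₁c hs₁' (fun y => y α) (hwcont_proj α)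
      have hval : (∫ y, y α * fderiv ℝ (uncurry Q) (t₀, y) ((1:ℝ), (0 : Fin n → ℝ)))
          = c α := by
        rw [show (fun y : Fin n → ℝ =>
            y α * fderiv ℝ (uncurry Q) (t₀, y) ((1:ℝ), (0 : Fin n → ℝ)))
            = fun y => ∑ β : Fin n, (-(c β)) * (y α * fderiv ℝ (Q t₀) y (Pi.single β 1)) from ?_]
        · rw [integral_finset_sum _ fun β _ =>
            ((intQxw t₀ _ (hwcont_proj α) _).const_mul _)]
          rw [show (∑ β : Fin n, ∫ y, (-(c β)) * (y α * fderiv ℝ (Q t₀) y (Pi.single β 1)))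
              = ∑ β : Fin n, (-(c β)) * (-((Pi.single β 1 : Fin n → ℝ) α)) from
            Finset.sum_congr rfl fun β _ => by rw [integral_const_mul, IBP1 α β]]
          simp [Pi.single_apply, hcdef]
        · funext y
          rw [RQ y, mul_neg, Finset.mul_sum, ← Finset.sum_neg_distrib]
          exact Finset.sum_congr rfl fun β _ => by ring
      rw [← hval]
      exact hd
    have hE2der : HasDerivAt E2 (∑ β : Fin n, c β * (2 * m t₀ β)) t₀ := by
      have hd := hasDerivAt_integral_weight hQ hεpos hK₁c hs₁'
        (fun y => ∑ α : Fin n, (y α)^2) hwcont_sq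
      have hval : (∫ y, (∑ α : Fin n, (y α)^2) *
          fderiv ℝ (uncurry Q) (t₀, y) ((1:ℝ), (0 : Fin n → ℝ)))
          = ∑ β : Fin n, c β * (2 * m t₀ β) := by
        rw [show (fun y : Fin n → ℝ => (∑ α : Fin n, (y α)^2) *
            fderiv ℝ (uncurry Q) (t₀, y) ((1:ℝ), (0 : Fin n → ℝ)))
            = fun y => ∑ β : Fin n, (-(c β)) *
              ((∑ α : Fin n, (y α)^2) * fderiv ℝ (Q t₀) y (Pi.single β 1)) from ?_]
        · rw [integral_finset_sum _ fun β _ =>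
            ((intQxw t₀ _ hwcont_sq _).const_mul _)]
          rw [show (∑ β : Fin n, ∫ y, (-(c β)) *
              ((∑ α : Fin n, (y α)^2) * fderiv ℝ (Q t₀) y (Pi.single β 1)))
              = ∑ β : Fin n, (-(c β)) * (-(2 * m t₀ β)) from
            Finset.sum_congr rfl fun β _ => by rw [integral_const_mul, IBP2 β]]
          exact Finset.sum_congr rfl fun β _ => by ring
        · funext y
          rw [RQ y, mul_neg, Finset.mul_sum, ← Finset.sum_neg_distrib]
          exact Finset.sum_congr rfl fun β _ => by ring
      rw [← hval]
      exact hd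
    have hsumder : HasDerivAt (fun t => ∑ α : Fin n, (m t α)^2)
        (∑ α : Fin n, (2:ℕ) * m t₀ α ^ 1 * c α) t₀ :=
      by simpa [Finset.sum_fn, Pi.pow_def] using HasDerivAt.sum (u := Finset.univ) fun α _ => (hmder α).pow 2
    have hfinal : (∑ β : Fin n, c β * (2 * m t₀ β))
        - (∑ α : Fin n, (2:ℕ) * m t₀ α ^ 1 * c α) = 0 := by
      rw [← Finset.sum_sub_distrib]
      refine Finset.sum_eq_zero fun α _ => ?_
      push_cast
      ring
    have hDder : HasDerivAt D ((∑ β : Fin n, c β * (2 * m t₀ β))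
        - (∑ α : Fin n, (2:ℕ) * m t₀ α ^ 1 * c α)) t₀ := hE2der.sub hsumder
    rw [hfinal] at hDder
    exact hDder
  have hconst := is_const_of_deriv_eq_zero (𝕜 := ℝ)
    (fun t => (stepB t).differentiableAt) (fun t => (stepB t).deriv) t₁ t₂
  have g1 := stepA t₁
  have g2 := stepA t₂
  rw [show (∫ q, (∑ α : Fin n, (q α - ∫ y, y α * Q t₁ y) ^ 2) * Q t₁ q)
      = ∫ q, (∑ α : Fin n, (q α - m t₁ α) ^ 2) * Q t₁ q from rfl,
    show (∫ q, (∑ α : Fin n, (q α - ∫ y, y α * Q t₂ y) ^ 2) * Q t₂ q)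
      = ∫ q, (∑ α : Fin n, (q α - m t₂ α) ^ 2) * Q t₂ q from rfl, g1, g2, hconst]

end DispersionsConst

open DispersionsConst in
/-- For a Hamiltonian `H(q,p) = T(p) + U(q)` with Hamiltonian vector field
`v = (∂ₚT, −∂_qU)`, if the wave packet factorizes, `R(t,q,p) = Q(t,q)·P(t,p)`,
is normalized, and satisfies the Liouville equation, then the position and
momentum dispersions are constant in time. -/
theorem factorized_dispersions_const (n : ℕ)
    (T U : (Fin n → ℝ) → ℝ)
    (Q P : ℝ → (Fin n → ℝ) → ℝ)
    (hT : ContDiff ℝ (⊤ : ℕ∞) T) (hU : ContDiff ℝ (⊤ : ℕ∞) U)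
    (hQ : ContDiff ℝ (⊤ : ℕ∞) (Function.uncurry Q))
    (hP : ContDiff ℝ (⊤ : ℕ∞) (Function.uncurry P))
    (hQsupp : ∀ t, HasCompactSupport (Q t))
    (hPsupp : ∀ t, HasCompactSupport (P t))
    (hQnorm : ∀ t, ∫ q, Q t q = 1)
    (hPnorm : ∀ t, ∫ p, P t p = 1)
    (hLiouville : ∀ (t : ℝ) (q p : Fin n → ℝ),
      deriv (fun τ => Q τ q * P τ p) t
        + (∑ α : Fin n,
            fderiv ℝ (fun q' => fderiv ℝ T p (Pi.single α 1) * (Q t q' * P t p)) q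
              (Pi.single α 1))
        + (∑ α : Fin n,
            fderiv ℝ (fun p' => -(fderiv ℝ U q (Pi.single α 1)) * (Q t q * P t p')) p
              (Pi.single α 1)) = 0)
    (qbar pbar : ℝ → Fin n → ℝ)
    (hqbar : ∀ t α, qbar t α = ∫ x : (Fin n → ℝ) × (Fin n → ℝ),
      x.1 α * (Q t x.1 * P t x.2))
    (hpbar : ∀ t α, pbar t α = ∫ x : (Fin n → ℝ) × (Fin n → ℝ),
      x.2 α * (Q t x.1 * P t x.2)) :
    ∀ t₁ t₂ : ℝ,
      (∫ x : (Fin n → ℝ) × (Fin n → ℝ),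
          (∑ α : Fin n, (x.1 α - qbar t₁ α) ^ 2) * (Q t₁ x.1 * P t₁ x.2))
        = (∫ x : (Fin n → ℝ) × (Fin n → ℝ),
          (∑ α : Fin n, (x.1 α - qbar t₂ α) ^ 2) * (Q t₂ x.1 * P t₂ x.2))
      ∧ (∫ x : (Fin n → ℝ) × (Fin n → ℝ),
          (∑ α : Fin n, (x.2 α - pbar t₁ α) ^ 2) * (Q t₁ x.1 * P t₁ x.2))
        = (∫ x : (Fin n → ℝ) × (Fin n → ℝ),
          (∑ α : Fin n, (x.2 α - pbar t₂ α) ^ 2) * (Q t₂ x.1 * P t₂ x.2)) := by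
  intro t₁ t₂
  have hQd : Differentiable ℝ (Function.uncurry Q) := hQ.differentiable (by simp)
  have hPd : Differentiable ℝ (Function.uncurry P) := hP.differentiable (by simp)
  have hQslcd : ∀ t, ContDiff ℝ (⊤ : ℕ∞) (Q t) := fun t =>
    hQ.comp ((contDiff_const (c := t)).prodMk contDiff_id)
  have hPslcd : ∀ t, ContDiff ℝ (⊤ : ℕ∞) (P t) := fun t =>
    hP.comp ((contDiff_const (c := t)).prodMk contDiff_id)
  -- the expanded form of the Liouville equation
  have hEL : EL T U Q P := by
    intro t q p
    have hL := hLiouville t q p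
    have hd : deriv (fun τ => Q τ q * P τ p) t
        = fderiv ℝ (Function.uncurry Q) (t, q) ((1:ℝ), (0 : Fin n → ℝ)) * P t p
          + Q t q * fderiv ℝ (Function.uncurry P) (t, p) ((1:ℝ), (0 : Fin n → ℝ)) :=
      ((hasDerivAt_slice_t hQd t q).mul (hasDerivAt_slice_t hPd t p)).deriv
    have h2 : ∀ α : Fin n,
        fderiv ℝ (fun q' => fderiv ℝ T p (Pi.single α 1) * (Q t q' * P t p)) q
          (Pi.single α 1)
        = fderiv ℝ T p (Pi.single α 1) *
            (fderiv ℝ (Function.uncurry Q) (t, q) ((0:ℝ), Pi.single α 1) * P t p) := by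
      intro α
      rw [show (fun q' => fderiv ℝ T p (Pi.single α 1) * (Q t q' * P t p))
          = fun q' => (fderiv ℝ T p (Pi.single α 1) * P t p) * Q t q' from
        funext fun q' => by ring]
      rw [fderiv_const_mul (((hQslcd t).differentiable (by simp)) q)]
      simp only [ContinuousLinearMap.smul_apply, smul_eq_mul]
      rw [show fderiv ℝ (Q t) q (Pi.single α 1)
          = fderiv ℝ (Function.uncurry Q) (t, q) ((0:ℝ), Pi.single α 1) from
        fderiv_slice_x hQd t q _]
      ring
    have h3 : (∑ α : Fin n,
        fderiv ℝ (fun p' => -(fderiv ℝ U q (Pi.single α 1)) * (Q t q * P t p')) p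
          (Pi.single α 1))
        = -∑ α : Fin n, fderiv ℝ U q (Pi.single α 1) *
            (Q t q * fderiv ℝ (Function.uncurry P) (t, p) ((0:ℝ), Pi.single α 1)) := by
      rw [← Finset.sum_neg_distrib]
      refine Finset.sum_congr rfl fun α _ => ?_
      rw [show (fun p' => -(fderiv ℝ U q (Pi.single α 1)) * (Q t q * P t p'))
          = fun p' => (-(fderiv ℝ U q (Pi.single α 1)) * Q t q) * P t p' from
        funext fun p' => by ring]
      rw [fderiv_const_mul (((hPslcd t).differentiable (by simp)) p)]
      simp only [ContinuousLinearMap.smul_apply, smul_eq_mul]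
      rw [show fderiv ℝ (P t) p (Pi.single α 1)
          = fderiv ℝ (Function.uncurry P) (t, p) ((0:ℝ), Pi.single α 1) from
        fderiv_slice_x hPd t p _]
      ring
    rw [hd, Finset.sum_congr rfl (fun α _ => h2 α), h3] at hL
    linarith [hL]
  -- product-integral reductions
  have red1 : ∀ (f g : (Fin n → ℝ) → ℝ),
      (∫ x : (Fin n → ℝ) × (Fin n → ℝ), f x.1 * g x.2) = (∫ q, f q) * ∫ p, g p := by
    intro f g
    rw [show (volume : Measure ((Fin n → ℝ) × (Fin n → ℝ)))
        = (volume : Measure (Fin n → ℝ)).prod volume from rfl]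
    exact MeasureTheory.integral_prod_mul f g
  have hqbar' : ∀ t α, qbar t α = ∫ y, y α * Q t y := by
    intro t α
    have hrg := red1 (fun y => y α * Q t y) (fun p => P t p)
    rw [hPnorm t, mul_one] at hrg
    rw [hqbar t α, ← hrg]
    congr 1
    funext x
    show x.1 α * (Q t x.1 * P t x.2) = (x.1 α * Q t x.1) * P t x.2
    ring
  have hpbar' : ∀ t α, pbar t α = ∫ y, y α * P t y := by
    intro t α
    have hrg := red1 (fun q => Q t q) (fun y => y α * P t y)
    rw [hQnorm t, one_mul] at hrg
    rw [hpbar t α, ← hrg]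
    congr 1
    funext x
    show x.2 α * (Q t x.1 * P t x.2) = Q t x.1 * (x.2 α * P t x.2)
    ring
  have dispq : ∀ t, (∫ x : (Fin n → ℝ) × (Fin n → ℝ),
      (∑ α : Fin n, (x.1 α - qbar t α) ^ 2) * (Q t x.1 * P t x.2))
      = ∫ q, (∑ α : Fin n, (q α - qbar t α) ^ 2) * Q t q := by
    intro t
    have hrg := red1 (fun q => (∑ α : Fin n, (q α - qbar t α) ^ 2) * Q t q)
      (fun p => P t p)
    rw [hPnorm t, mul_one] at hrg
    rw [← hrg]
    congr 1
    funext x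
    show (∑ α : Fin n, (x.1 α - qbar t α) ^ 2) * (Q t x.1 * P t x.2)
      = ((∑ α : Fin n, (x.1 α - qbar t α) ^ 2) * Q t x.1) * P t x.2
    ring
  have dispp : ∀ t, (∫ x : (Fin n → ℝ) × (Fin n → ℝ),
      (∑ α : Fin n, (x.2 α - pbar t α) ^ 2) * (Q t x.1 * P t x.2))
      = ∫ p, (∑ α : Fin n, (p α - pbar t α) ^ 2) * P t p := by
    intro t
    have hrg := red1 (fun q => Q t q)
      (fun p => (∑ α : Fin n, (p α - pbar t α) ^ 2) * P t p)
    rw [hQnorm t, one_mul] at hrg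
    rw [← hrg]
    congr 1
    funext x
    show (∑ α : Fin n, (x.2 α - pbar t α) ^ 2) * (Q t x.1 * P t x.2)
      = Q t x.1 * ((∑ α : Fin n, (x.2 α - pbar t α) ^ 2) * P t x.2)
    ring
  constructor
  · have hkey := key T U Q P hT hU hQ hP hQsupp hPsupp hQnorm hPnorm hEL t₁ t₂
    rw [dispq t₁, dispq t₂]
    simp only [hqbar']
    exact hkey
  · have hkey := key (fun x => -U x) (fun x => -T x) P Q hU.neg hT.neg hP hQ
      hPsupp hQsupp hPnorm hQnorm hEL.swap t₁ t₂
    rw [dispp t₁, dispp t₂]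
    simp only [hpbar']
    exact hkey
end

section
/- For the harmonic oscillator wave packet, the position dispersion is Δq²(t) = Δr² cos²(ωt) + C·(1/(mω)) sin(2ωt) + Δs²·(1/(mω))² sin²(ωt) and the momentum dispersion is Δp²(t) = Δr² (mω)² sin²(ωt) − C·mω sin(2ωt) + Δs² cos²(ωt), where Δr², Δs², C are the second central moments of ρ. -/
open MeasureTheory

noncomputable def eqv (c σ a : ℝ) (ha : a ≠ 0) (h1 : c^2 + σ^2 = 1) : (ℝ×ℝ) ≃ₗ[ℝ] (ℝ×ℝ) where
  toFun x := (x.1 * c - x.2 / a * σ, a * x.1 * σ + x.2 * c)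
  invFun y := (y.1 * c + y.2 / a * σ, -(a * y.1 * σ) + y.2 * c)
  map_add' x y := by simp [Prod.ext_iff]; constructor <;> ring
  map_smul' r x := by simp [Prod.ext_iff]; constructor <;> ring
  left_inv x := by
    simp only [Prod.ext_iff]
    constructor
    · field_simp; linear_combination (x.1 * a) * h1
    · field_simp; linear_combination x.2 * h1
  right_inv y := by
    simp only [Prod.ext_iff]
    constructor
    · field_simp; linear_combination (y.1 * a) * h1
    · field_simp; linear_combination y.2 * h1

lemma eqv_det (c σ a : ℝ) (ha : a ≠ 0) (h1 : c^2 + σ^2 = 1) :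
    LinearMap.det ((eqv c σ a ha h1) : (ℝ×ℝ) →ₗ[ℝ] (ℝ×ℝ)) = 1 := by
  rw [← LinearMap.det_toMatrix (Module.Basis.finTwoProd ℝ), Matrix.det_fin_two]
  simp [LinearMap.toMatrix_apply, Module.Basis.coe_finTwoProd_repr, Module.Basis.finTwoProd_zero,
    Module.Basis.finTwoProd_one, eqv]
  field_simp
  linear_combination h1

lemma eqv_integral (c σ a : ℝ) (ha : a ≠ 0) (h1 : c^2 + σ^2 = 1) (g : ℝ × ℝ → ℝ) :
    ∫ x : ℝ × ℝ, g (eqv c σ a ha h1 x) = ∫ y : ℝ × ℝ, g y := by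
  have hdet := eqv_det c σ a ha h1
  have hmap : Measure.map (eqv c σ a ha h1) volume = volume := by
    have h := Measure.map_linearMap_addHaar_eq_smul_addHaar (μ := volume)
      (f := ((eqv c σ a ha h1) : (ℝ × ℝ) →ₗ[ℝ] (ℝ × ℝ))) (by rw [hdet]; norm_num)
    simpa [hdet] using h
  have hmp : MeasurePreserving (eqv c σ a ha h1) volume volume :=
    ⟨(eqv c σ a ha h1).toContinuousLinearEquiv.continuous.measurable, hmap⟩
  exact hmp.integral_comp
    (eqv c σ a ha h1).toContinuousLinearEquiv.toHomeomorph.measurableEmbedding g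

lemma integ_aux (ρ : ℝ × ℝ → ℝ) (hc : Continuous ρ) (hs : HasCompactSupport ρ)
    (f : ℝ × ℝ → ℝ) (hf : Continuous f) :
    Integrable (fun y : ℝ × ℝ => f y * ρ y) :=
  (hf.mul hc).integrable_of_hasCompactSupport (hs.mul_left)

lemma mean_lin (ρ : ℝ × ℝ → ℝ) (hc : Continuous ρ) (hs : HasCompactSupport ρ)
    (c d : ℝ) :
    ∫ y : ℝ × ℝ, (y.1 * c + y.2 * d) * ρ y
      = c * (∫ y : ℝ × ℝ, y.1 * ρ y) + d * (∫ y : ℝ × ℝ, y.2 * ρ y) := by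
  have h : ∀ y : ℝ × ℝ, (y.1 * c + y.2 * d) * ρ y
      = c * (y.1 * ρ y) + d * (y.2 * ρ y) := by intro y; ring
  simp_rw [h]
  have i1 : Integrable (fun y : ℝ × ℝ => c * (y.1 * ρ y)) :=
    (integ_aux ρ hc hs _ continuous_fst).const_mul c
  have i2 : Integrable (fun y : ℝ × ℝ => d * (y.2 * ρ y)) :=
    (integ_aux ρ hc hs _ continuous_snd).const_mul d
  rw [integral_add i1 i2, integral_const_mul, integral_const_mul]

lemma moment_expand (ρ : ℝ × ℝ → ℝ) (hc : Continuous ρ) (hs : HasCompactSupport ρ)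
    (rbar sbar c d : ℝ) :
    ∫ y : ℝ × ℝ, (c * (y.1 - rbar) + d * (y.2 - sbar)) ^ 2 * ρ y
      = c ^ 2 * (∫ y : ℝ × ℝ, (y.1 - rbar) ^ 2 * ρ y)
        + 2 * c * d * (∫ y : ℝ × ℝ, (y.1 - rbar) * (y.2 - sbar) * ρ y)
        + d ^ 2 * (∫ y : ℝ × ℝ, (y.2 - sbar) ^ 2 * ρ y) := by
  have h : ∀ y : ℝ × ℝ, (c * (y.1 - rbar) + d * (y.2 - sbar)) ^ 2 * ρ y
      = c ^ 2 * ((y.1 - rbar) ^ 2 * ρ y) + (2 * c * d) * ((y.1 - rbar) * (y.2 - sbar) * ρ y)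
        + d ^ 2 * ((y.2 - sbar) ^ 2 * ρ y) := by intro y; ring
  simp_rw [h]
  have i1 : Integrable (fun y : ℝ × ℝ => (y.1 - rbar) ^ 2 * ρ y) :=
    integ_aux ρ hc hs _ (by fun_prop)
  have i2 : Integrable (fun y : ℝ × ℝ => (y.1 - rbar) * (y.2 - sbar) * ρ y) :=
    integ_aux ρ hc hs _ (by fun_prop)
  have i3 : Integrable (fun y : ℝ × ℝ => (y.2 - sbar) ^ 2 * ρ y) :=
    integ_aux ρ hc hs _ (by fun_prop)
  have j1 : Integrable (fun y : ℝ × ℝ => c ^ 2 * ((y.1 - rbar) ^ 2 * ρ y)) := i1.const_mul _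
  have j2 : Integrable (fun y : ℝ × ℝ => 2 * c * d * ((y.1 - rbar) * (y.2 - sbar) * ρ y)) :=
    i2.const_mul _
  have j3 : Integrable (fun y : ℝ × ℝ => d ^ 2 * ((y.2 - sbar) ^ 2 * ρ y)) := i3.const_mul _
  have j12 : Integrable (fun y : ℝ × ℝ => c ^ 2 * ((y.1 - rbar) ^ 2 * ρ y)
      + 2 * c * d * ((y.1 - rbar) * (y.2 - sbar) * ρ y)) := j1.add j2
  rw [integral_add j12 j3, integral_add j1 j2, integral_const_mul, integral_const_mul,
    integral_const_mul]

/-- For the harmonic oscillator wave packet, the position dispersion is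
`Δq²(t) = Δr² cos²ωt + C (1/(mω)) sin 2ωt + Δs² (1/(mω))² sin²ωt` and the momentum
dispersion is `Δp²(t) = Δr² (mω)² sin²ωt − C mω sin 2ωt + Δs² cos²ωt`. -/
theorem harmonic_oscillator_dispersions (m k : ℝ) (hm : 0 < m) (hk : 0 < k)
    (ω : ℝ) (hω : ω = Real.sqrt (k / m))
    (ρ : ℝ × ℝ → ℝ) (hρ : ContDiff ℝ (⊤ : ℕ∞) ρ)
    (hsupp : HasCompactSupport ρ) (hpos : ∀ y, 0 ≤ ρ y)
    (hnorm : ∫ y : ℝ × ℝ, ρ y = 1)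
    (R : ℝ → ℝ → ℝ → ℝ)
    (hR : ∀ t q p, R t q p = ρ (q * Real.cos (ω * t) - p / (m * ω) * Real.sin (ω * t),
      m * ω * q * Real.sin (ω * t) + p * Real.cos (ω * t)))
    (rbar sbar Δr2 Δs2 C : ℝ)
    (hrbar : rbar = ∫ y : ℝ × ℝ, y.1 * ρ y)
    (hsbar : sbar = ∫ y : ℝ × ℝ, y.2 * ρ y)
    (hΔr2 : Δr2 = ∫ y : ℝ × ℝ, (y.1 - rbar) ^ 2 * ρ y)
    (hΔs2 : Δs2 = ∫ y : ℝ × ℝ, (y.2 - sbar) ^ 2 * ρ y)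
    (hC : C = ∫ y : ℝ × ℝ, (y.1 - rbar) * (y.2 - sbar) * ρ y)
    (qbar pbar : ℝ → ℝ)
    (hqbar : ∀ t, qbar t = ∫ x : ℝ × ℝ, x.1 * R t x.1 x.2)
    (hpbar : ∀ t, pbar t = ∫ x : ℝ × ℝ, x.2 * R t x.1 x.2) :
    ∀ t : ℝ,
      (∫ x : ℝ × ℝ, (x.1 - qbar t) ^ 2 * R t x.1 x.2)
          = Δr2 * Real.cos (ω * t) ^ 2 + C * (1 / (m * ω)) * Real.sin (2 * (ω * t))
            + Δs2 * (1 / (m * ω)) ^ 2 * Real.sin (ω * t) ^ 2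
      ∧ (∫ x : ℝ × ℝ, (x.2 - pbar t) ^ 2 * R t x.1 x.2)
          = Δr2 * (m * ω) ^ 2 * Real.sin (ω * t) ^ 2 - C * (m * ω) * Real.sin (2 * (ω * t))
            + Δs2 * Real.cos (ω * t) ^ 2 := by
  intro t
  have hω0 : 0 < ω := by
    rw [hω]; exact Real.sqrt_pos.2 (div_pos hk hm)
  have ha : m * ω ≠ 0 := by positivity
  set c := Real.cos (ω * t) with hc
  set σ := Real.sin (ω * t) with hσ
  have h1 : c ^ 2 + σ ^ 2 = 1 := Real.cos_sq_add_sin_sq (ω * t)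
  have hcont : Continuous ρ := hρ.continuous
  have he : ∀ x : ℝ × ℝ, eqv c σ (m * ω) ha h1 x
      = (x.1 * c - x.2 / (m * ω) * σ, m * ω * x.1 * σ + x.2 * c) := fun x => rfl
  have key : ∀ g : ℝ × ℝ → ℝ, (∫ x : ℝ × ℝ, g x * R t x.1 x.2)
      = ∫ y : ℝ × ℝ, g (y.1 * c + y.2 / (m * ω) * σ, -(m * ω * y.1 * σ) + y.2 * c) * ρ y := by
    intro g
    have hint := eqv_integral c σ (m * ω) ha h1
      (fun y => g ((eqv c σ (m * ω) ha h1).symm y) * ρ y)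
    have hsymm : ∀ y : ℝ × ℝ, (eqv c σ (m * ω) ha h1).symm y
        = (y.1 * c + y.2 / (m * ω) * σ, -(m * ω * y.1 * σ) + y.2 * c) := fun y => rfl
    calc (∫ x : ℝ × ℝ, g x * R t x.1 x.2)
        = ∫ x : ℝ × ℝ, g ((eqv c σ (m * ω) ha h1).symm (eqv c σ (m * ω) ha h1 x))
            * ρ (eqv c σ (m * ω) ha h1 x) := by
          refine integral_congr_ae (Filter.Eventually.of_forall fun x => ?_)
          simp only [LinearEquiv.symm_apply_apply]
          rw [hR, he x]
      _ = ∫ y : ℝ × ℝ, g ((eqv c σ (m * ω) ha h1).symm y) * ρ y := hint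
      _ = _ := by simp_rw [hsymm]
  have hq : qbar t = c * rbar + σ / (m * ω) * sbar := by
    rw [hqbar t, key (fun x => x.1)]
    have h2 : ∀ y : ℝ × ℝ, (y.1 * c + y.2 / (m * ω) * σ) * ρ y
        = (y.1 * c + y.2 * (σ / (m * ω))) * ρ y := by intro y; ring
    simp_rw [h2, mean_lin ρ hcont hsupp c (σ / (m * ω)), ← hrbar, ← hsbar]
  have hp : pbar t = -(m * ω * σ) * rbar + c * sbar := by
    rw [hpbar t, key (fun x => x.2)]
    have h2 : ∀ y : ℝ × ℝ, (-(m * ω * y.1 * σ) + y.2 * c) * ρ y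
        = (y.1 * (-(m * ω * σ)) + y.2 * c) * ρ y := by intro y; ring
    simp_rw [h2, mean_lin ρ hcont hsupp (-(m * ω * σ)) c, ← hrbar, ← hsbar]
  constructor
  · rw [key (fun x => (x.1 - qbar t) ^ 2)]
    have h2 : ∀ y : ℝ × ℝ, (y.1 * c + y.2 / (m * ω) * σ - qbar t) ^ 2 * ρ y
        = (c * (y.1 - rbar) + σ / (m * ω) * (y.2 - sbar)) ^ 2 * ρ y := by
      intro y; rw [hq]; ring
    simp_rw [h2, moment_expand ρ hcont hsupp rbar sbar c (σ / (m * ω)),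
      ← hΔr2, ← hΔs2, ← hC, Real.sin_two_mul, ← hc, ← hσ]
    field_simp
  · rw [key (fun x => (x.2 - pbar t) ^ 2)]
    have h2 : ∀ y : ℝ × ℝ, (-(m * ω * y.1 * σ) + y.2 * c - pbar t) ^ 2 * ρ y
        = (-(m * ω * σ) * (y.1 - rbar) + c * (y.2 - sbar)) ^ 2 * ρ y := by
      intro y; rw [hp]; ring
    simp_rw [h2, moment_expand ρ hcont hsupp rbar sbar (-(m * ω * σ)) c,
      ← hΔr2, ← hΔs2, ← hC, Real.sin_two_mul, ← hc, ← hσ]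
    ring
end
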